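/- Let M = (m₁,…,mₙ) ∈ ℕⁿ with each mⱼ ≥ 1. There exist constants ĉ > 0 and ε̂ > 0 sufficiently small such that for all 0 < ε ≤ ε̂ there exists 0 < ε′ < ε such that for every M-conic set X ⊂ ℝⁿ∖{0} one has X_{[ε′⟨·⟩_M]} ⊂ ∪_{η∈X∩𝕊_M} Γ_M(η;ε) ∩ {ξ : ⟨ξ⟩_M > ĉ/ε}, and conversely ∪_{η∈X∩𝕊_M} Γ_M(η;ε′) ∩ {ξ : ⟨ξ⟩_M > ĉ/ε′} ⊂ X_{[ε⟨·⟩_M]}. -/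

import Mathlib

open MeasureTheory

variable {n : ℕ}

/-- The quasi-homogeneous weight `⟨ξ⟩_M = (1 + Σ_j ξ_j^(2 m_j))^(1/2)`. -/
noncomputable def qw (M : Fin n → ℕ) (ξ : EuclideanSpace ℝ (Fin n)) : ℝ :=
  Real.sqrt (1 + ∑ j, ξ j ^ (2 * M j))

/-- The quasi-homogeneous norm `|ξ|_M = (Σ_j ξ_j^(2 m_j))^(1/2)`. -/
noncomputable def qnorm (M : Fin n → ℕ) (ξ : EuclideanSpace ℝ (Fin n)) : ℝ :=
  Real.sqrt (∑ j, ξ j ^ (2 * M j))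

/-- The anisotropic dilation `t^{1/M} ξ = (t^{1/m₁} ξ₁, …, t^{1/mₙ} ξₙ)`. -/
noncomputable def qdil (M : Fin n → ℕ) (t : ℝ) (ξ : EuclideanSpace ℝ (Fin n)) :
    EuclideanSpace ℝ (Fin n) :=
  (EuclideanSpace.equiv (Fin n) ℝ).symm fun j => t ^ ((M j : ℝ))⁻¹ * ξ j

/-- A set `Γ ⊆ ℝⁿ ∖ {0}` is `M`-conic if it is stable under all dilations `t^{1/M}`. -/
def IsMConic (M : Fin n → ℕ) (X : Set (EuclideanSpace ℝ (Fin n))) : Prop :=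
  ∀ ξ ∈ X, ∀ t : ℝ, 0 < t → qdil M t ξ ∈ X

/-- The unit `M`-sphere `𝕊_M = {x : |x|_M = 1}`. -/
def mSphere (M : Fin n → ℕ) : Set (EuclideanSpace ℝ (Fin n)) :=
  {x | qnorm M x = 1}

/-- The `M`-ball `B_M(x₀; R) = {x : |x - x₀|_M < R}`. -/
def mBall (M : Fin n → ℕ) (x₀ : EuclideanSpace ℝ (Fin n)) (R : ℝ) :
    Set (EuclideanSpace ℝ (Fin n)) :=
  {x | qnorm M (x - x₀) < R}

/-- The `M`-cone generated by `B_M(η; R)`: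
`Γ_M(η; R) = {t^{1/M} ξ : ξ ∈ B_M(η; R), t > 0} ∩ (ℝⁿ ∖ {0})`. -/
def mCone (M : Fin n → ℕ) (η : EuclideanSpace ℝ (Fin n)) (R : ℝ) :
    Set (EuclideanSpace ℝ (Fin n)) :=
  {ζ | ζ ≠ 0 ∧ ∃ t : ℝ, 0 < t ∧ ∃ ξ ∈ mBall M η R, ζ = qdil M t ξ}

/-- The `[⟨·⟩_M]`-neighborhood of size `ε` of `X`:
`X_{[ε⟨·⟩_M]} = ⋃_{ξ₀ ∈ X} {ξ : ⟨ξ - ξ₀⟩_M < ε ⟨ξ₀⟩_M}`. -/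
def brNbhdM (M : Fin n → ℕ) (ε : ℝ) (X : Set (EuclideanSpace ℝ (Fin n))) :
    Set (EuclideanSpace ℝ (Fin n)) :=
  ⋃ ξ₀ ∈ X, {ξ | qw M (ξ - ξ₀) < ε * qw M ξ₀}

/-!
Everything reduces to three facts about the quasi-norm: `|ξ|_M ≤ ⟨ξ⟩_M ≤ 1 + |ξ|_M`, the
homogeneity `|t^{1/M} ξ|_M = t |ξ|_M`, and the quasi-triangle inequality
`|a + b|_M ≤ K (|a|_M + |b|_M)` with `K = 2^{max mⱼ}`. Since `⟨·⟩_M ≥ 1`, a point `ξ` with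
`⟨ξ - ξ₀⟩_M < ε' ⟨ξ₀⟩_M` forces `|ξ₀|_M > 1/(2ε')`; at that scale weight and norm are
comparable, and dilating `ξ₀` onto `𝕊_M` turns the condition into the cone condition.
Conversely, the truncation `⟨ξ⟩_M > ĉ/ε'` forces the dilation parameter of a cone point to
exceed `1/ε'`. The constants `ĉ = 4K`, `ε̂ = 1`, `ε' = ε/(16K²)` work.
-/

section QuasiNorm

variable {M : Fin n → ℕ}

lemma sum_pow_two_mul_nonneg (ξ : EuclideanSpace ℝ (Fin n)) : 0 ≤ ∑ j, ξ j ^ (2 * M j) :=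
  Finset.sum_nonneg fun j _ => (even_two_mul (M j)).pow_nonneg _

lemma qnorm_nonneg (ξ : EuclideanSpace ℝ (Fin n)) : 0 ≤ qnorm M ξ :=
  Real.sqrt_nonneg _

lemma qnorm_sq (ξ : EuclideanSpace ℝ (Fin n)) : qnorm M ξ ^ 2 = ∑ j, ξ j ^ (2 * M j) :=
  Real.sq_sqrt (sum_pow_two_mul_nonneg ξ)

lemma qw_eq_sqrt_one_add_qnorm_sq (ξ : EuclideanSpace ℝ (Fin n)) :
    qw M ξ = √(1 + qnorm M ξ ^ 2) := by
  rw [qnorm_sq, qw]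

lemma one_le_qw (ξ : EuclideanSpace ℝ (Fin n)) : 1 ≤ qw M ξ := by
  rw [qw_eq_sqrt_one_add_qnorm_sq, Real.one_le_sqrt]
  nlinarith [qnorm_nonneg (M := M) ξ]

lemma qnorm_le_qw (ξ : EuclideanSpace ℝ (Fin n)) : qnorm M ξ ≤ qw M ξ := by
  rw [qw_eq_sqrt_one_add_qnorm_sq, Real.le_sqrt (qnorm_nonneg ξ) (by positivity)]
  linarith

lemma qw_le_one_add_qnorm (ξ : EuclideanSpace ℝ (Fin n)) : qw M ξ ≤ 1 + qnorm M ξ := by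
  rw [qw_eq_sqrt_one_add_qnorm_sq, Real.sqrt_le_left (by linarith [qnorm_nonneg (M := M) ξ])]
  nlinarith [qnorm_nonneg (M := M) ξ]

lemma qnorm_neg (ξ : EuclideanSpace ℝ (Fin n)) : qnorm M (-ξ) = qnorm M ξ := by
  simp only [qnorm, PiLp.neg_apply, (even_two_mul _).neg_pow]

lemma qnorm_sub_comm (ξ ζ : EuclideanSpace ℝ (Fin n)) : qnorm M (ξ - ζ) = qnorm M (ζ - ξ) := by
  rw [← qnorm_neg, neg_sub]

end QuasiNorm

/-- The constant `K` of the quasi-triangle inequality `|a + b|_M ≤ K (|a|_M + |b|_M)`. -/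
noncomputable def quasiConst (M : Fin n → ℕ) : ℝ := 2 ^ Finset.univ.sup M

lemma one_le_quasiConst (M : Fin n → ℕ) : 1 ≤ quasiConst M :=
  one_le_pow₀ one_le_two

lemma add_pow_two_mul_le_quasiConst (M : Fin n → ℕ) (j : Fin n) (x y : ℝ) :
    (x + y) ^ (2 * M j) ≤ quasiConst M ^ 2 * (x ^ (2 * M j) + y ^ (2 * M j)) := by
  refine (even_two_mul (M j)).add_pow_le.trans (mul_le_mul_of_nonneg_right ?_ ?_)
  · rw [quasiConst, ← pow_mul]
    have := Finset.le_sup (f := M) (Finset.mem_univ j)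
    exact pow_le_pow_right₀ one_le_two (by omega)
  · exact add_nonneg ((even_two_mul _).pow_nonneg x) ((even_two_mul _).pow_nonneg y)

lemma qnorm_add_le (M : Fin n → ℕ) (a b : EuclideanSpace ℝ (Fin n)) :
    qnorm M (a + b) ≤ quasiConst M * (qnorm M a + qnorm M b) := by
  have ha := qnorm_nonneg (M := M) a
  have hb := qnorm_nonneg (M := M) b
  refine le_of_pow_le_pow_left₀ two_ne_zero
    (mul_nonneg (zero_le_one.trans (one_le_quasiConst M)) (add_nonneg ha hb)) ?_
  calc qnorm M (a + b) ^ 2 = ∑ j, (a j + b j) ^ (2 * M j) := qnorm_sq _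
    _ ≤ ∑ j, quasiConst M ^ 2 * (a j ^ (2 * M j) + b j ^ (2 * M j)) :=
        Finset.sum_le_sum fun j _ => add_pow_two_mul_le_quasiConst M j _ _
    _ = quasiConst M ^ 2 * (qnorm M a ^ 2 + qnorm M b ^ 2) := by
        rw [← Finset.mul_sum, Finset.sum_add_distrib, qnorm_sq, qnorm_sq]
    _ ≤ (quasiConst M * (qnorm M a + qnorm M b)) ^ 2 := by
        rw [mul_pow]
        gcongr
        nlinarith

section Dilation

variable {M : Fin n → ℕ}

lemma qdil_apply (t : ℝ) (ξ : EuclideanSpace ℝ (Fin n)) (j : Fin n) :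
    qdil M t ξ j = t ^ ((M j : ℝ))⁻¹ * ξ j :=
  rfl

lemma qdil_sub (t : ℝ) (a b : EuclideanSpace ℝ (Fin n)) :
    qdil M t (a - b) = qdil M t a - qdil M t b := by
  ext j
  simp only [qdil_apply, PiLp.sub_apply, mul_sub]

lemma qdil_qdil {s t : ℝ} (hs : 0 ≤ s) (ht : 0 ≤ t) (ξ : EuclideanSpace ℝ (Fin n)) :
    qdil M s (qdil M t ξ) = qdil M (s * t) ξ := by
  ext j
  simp only [qdil_apply, Real.mul_rpow hs ht, mul_assoc]

lemma qdil_one (ξ : EuclideanSpace ℝ (Fin n)) : qdil M 1 ξ = ξ := by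
  ext j
  simp only [qdil_apply, Real.one_rpow, one_mul]

lemma qdil_inv_qdil {t : ℝ} (ht : 0 < t) (ξ : EuclideanSpace ℝ (Fin n)) :
    qdil M t⁻¹ (qdil M t ξ) = ξ := by
  rw [qdil_qdil (inv_nonneg.2 ht.le) ht.le, inv_mul_cancel₀ ht.ne', qdil_one]

lemma qdil_qdil_inv {t : ℝ} (ht : 0 < t) (ξ : EuclideanSpace ℝ (Fin n)) :
    qdil M t (qdil M t⁻¹ ξ) = ξ := by
  rw [qdil_qdil ht.le (inv_nonneg.2 ht.le), mul_inv_cancel₀ ht.ne', qdil_one]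

lemma qnorm_qdil (hM : ∀ j, 1 ≤ M j) {t : ℝ} (ht : 0 ≤ t) (ξ : EuclideanSpace ℝ (Fin n)) :
    qnorm M (qdil M t ξ) = t * qnorm M ξ := by
  have hpow (j : Fin n) : (t ^ ((M j : ℝ))⁻¹) ^ (2 * M j) = t ^ 2 := by
    have hMj : (M j : ℝ) ≠ 0 := by exact_mod_cast Nat.one_le_iff_ne_zero.mp (hM j)
    rw [← Real.rpow_natCast, ← Real.rpow_mul ht, Nat.cast_mul, mul_comm ((2 : ℕ) : ℝ),
      inv_mul_cancel_left₀ hMj]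
    norm_num
  simp only [qnorm, qdil_apply, mul_pow, hpow, ← Finset.mul_sum]
  rw [Real.sqrt_mul (sq_nonneg t), Real.sqrt_sq ht]

lemma qnorm_qdil_sub_qdil (hM : ∀ j, 1 ≤ M j) {t : ℝ} (ht : 0 ≤ t)
    (ξ ζ : EuclideanSpace ℝ (Fin n)) :
    qnorm M (qdil M t ξ - qdil M t ζ) = t * qnorm M (ξ - ζ) := by
  rw [← qdil_sub, qnorm_qdil hM ht]

end Dilation

section Cones

variable {M : Fin n → ℕ}

lemma IsMConic.exists_mem_mSphere_qdil_eq (hM : ∀ j, 1 ≤ M j)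
    {X : Set (EuclideanSpace ℝ (Fin n))} (hX : IsMConic M X) {ξ : EuclideanSpace ℝ (Fin n)}
    (hξX : ξ ∈ X) (hξ : 0 < qnorm M ξ) :
    ∃ η ∈ X ∩ mSphere M, qdil M (qnorm M ξ) η = ξ := by
  refine ⟨qdil M (qnorm M ξ)⁻¹ ξ, ⟨hX ξ hξX _ (inv_pos.2 hξ), ?_⟩, qdil_qdil_inv hξ ξ⟩
  change qnorm M _ = 1
  rw [qnorm_qdil hM (inv_nonneg.2 hξ.le), inv_mul_cancel₀ hξ.ne']

lemma mem_mCone_of_qnorm_sub_qdil_lt (hM : ∀ j, 1 ≤ M j) {ξ η : EuclideanSpace ℝ (Fin n)}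
    {t R : ℝ} (hξ : ξ ≠ 0) (ht : 0 < t) (h : qnorm M (ξ - qdil M t η) < t * R) :
    ξ ∈ mCone M η R := by
  refine ⟨hξ, t, ht, qdil M t⁻¹ ξ, ?_, (qdil_qdil_inv ht ξ).symm⟩
  change qnorm M _ < R
  rw [← qdil_inv_qdil ht η, qnorm_qdil_sub_qdil hM (inv_nonneg.2 ht.le),
    inv_mul_lt_iff₀ ht]
  exact h

end Cones

section Inclusions

variable {M : Fin n → ℕ}

lemma one_lt_two_mul_qnorm_of_qw_sub_lt {ξ ξ₀ : EuclideanSpace ℝ (Fin n)} {ε : ℝ}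
    (hε : ε ≤ 1 / 2) (h : qw M (ξ - ξ₀) < ε * qw M ξ₀) : 1 < 2 * ε * qnorm M ξ₀ := by
  have hε₀ : 0 < ε := by nlinarith [one_le_qw (M := M) (ξ - ξ₀), one_le_qw (M := M) ξ₀]
  have h₁ : 1 < ε * (1 + qnorm M ξ₀) :=
    (one_le_qw _).trans_lt (h.trans_le (by gcongr; exact qw_le_one_add_qnorm _))
  nlinarith

lemma qnorm_sub_lt_of_qw_sub_lt {ξ ξ₀ : EuclideanSpace ℝ (Fin n)} {ε : ℝ}
    (hε : ε ≤ 1 / 2) (h : qw M (ξ - ξ₀) < ε * qw M ξ₀) :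
    qnorm M (ξ - ξ₀) < 2 * ε * qnorm M ξ₀ := by
  have h₁ := one_lt_two_mul_qnorm_of_qw_sub_lt hε h
  have hε₀ : 0 < ε := by nlinarith [qnorm_nonneg (M := M) ξ₀]
  calc qnorm M (ξ - ξ₀) ≤ qw M (ξ - ξ₀) := qnorm_le_qw _
    _ < ε * qw M ξ₀ := h
    _ ≤ ε * (1 + qnorm M ξ₀) := by gcongr; exact qw_le_one_add_qnorm _
    _ ≤ 2 * ε * qnorm M ξ₀ := by nlinarith

theorem brNbhdM_subset_iUnion_mCone (hM : ∀ j, 1 ≤ M j) {X : Set (EuclideanSpace ℝ (Fin n))}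
    (hX : IsMConic M X) {ε ε' : ℝ} (hε : ε ≤ 1) (hε' : 16 * quasiConst M ^ 2 * ε' ≤ ε) :
    brNbhdM M ε' X ⊆
      (⋃ η ∈ X ∩ mSphere M, mCone M η ε) ∩ {ξ | 4 * quasiConst M / ε < qw M ξ} := by
  intro ξ hξ
  simp only [brNbhdM, Set.mem_iUnion] at hξ
  obtain ⟨ξ₀, hξ₀X, hξξ₀⟩ := hξ
  set K := quasiConst M
  set r := qnorm M ξ₀
  have hK := one_le_quasiConst M
  have hε'K : 4 * K * ε' ≤ 1 := by nlinarith
  have hε'half : ε' ≤ 1 / 2 := by nlinarith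
  have hr₁ : 1 < 2 * ε' * r := one_lt_two_mul_qnorm_of_qw_sub_lt hε'half hξξ₀
  have hr : 0 < r := by nlinarith [qnorm_nonneg (M := M) ξ₀]
  have hε'₀ : 0 < ε' := by nlinarith
  have hsub : qnorm M (ξ - ξ₀) < 2 * ε' * r := qnorm_sub_lt_of_qw_sub_lt hε'half hξξ₀
  have hξ : ξ ≠ 0 := by
    rintro rfl
    rw [zero_sub, qnorm_neg] at hsub
    nlinarith
  have hr_le : r ≤ K * (2 * ε' * r + qw M ξ) := by
    calc r = qnorm M (ξ₀ - ξ + ξ) := by rw [sub_add_cancel]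
      _ ≤ K * (qnorm M (ξ₀ - ξ) + qnorm M ξ) := qnorm_add_le M _ _
      _ ≤ K * (2 * ε' * r + qw M ξ) := by
        rw [qnorm_sub_comm]
        gcongr
        exact qnorm_le_qw ξ
  obtain ⟨η, hη, hηξ₀⟩ := hX.exists_mem_mSphere_qdil_eq hM hξ₀X hr
  refine ⟨Set.mem_biUnion hη (mem_mCone_of_qnorm_sub_qdil_lt hM hξ hr ?_), ?_⟩
  · calc qnorm M (ξ - qdil M r η) = qnorm M (ξ - ξ₀) := by rw [hηξ₀]
      _ < 2 * ε' * r := hsub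
      _ ≤ r * ε := by nlinarith [one_le_pow₀ (n := 2) hK]
  · change 4 * K / ε < qw M ξ
    have hr_qw : r ≤ 2 * K * qw M ξ := by nlinarith
    have hqw : 1 < 4 * K * ε' * qw M ξ := by nlinarith
    rw [div_lt_iff₀ (by nlinarith)]
    calc 4 * K = 4 * K * 1 := (mul_one _).symm
      _ < 4 * K * (4 * K * ε' * qw M ξ) := by gcongr
      _ = 16 * K ^ 2 * ε' * qw M ξ := by ring
      _ ≤ qw M ξ * ε := by nlinarith [one_le_qw (M := M) ξ]

theorem iUnion_mCone_subset_brNbhdM (hM : ∀ j, 1 ≤ M j) {X : Set (EuclideanSpace ℝ (Fin n))}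
    (hX : IsMConic M X) {ε ε' : ℝ} (hε'₀ : 0 < ε') (hε'₁ : ε' ≤ 1) (hε' : 2 * ε' ≤ ε) :
    (⋃ η ∈ X ∩ mSphere M, mCone M η ε') ∩ {ξ | 4 * quasiConst M / ε' < qw M ξ} ⊆
      brNbhdM M ε X := by
  rintro _ ⟨hξ, hbig⟩
  simp only [Set.mem_iUnion] at hξ
  obtain ⟨η, ⟨hηX, hη⟩, -, t, ht, ζ, hζ, rfl⟩ := hξ
  change qnorm M (ζ - η) < ε' at hζ
  change qnorm M η = 1 at hη
  change 4 * quasiConst M / ε' < qw M (qdil M t ζ) at hbig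
  set K := quasiConst M
  have hK := one_le_quasiConst M
  have hζ_le : qnorm M ζ ≤ 2 * K :=
    calc qnorm M ζ = qnorm M (η + (ζ - η)) := by rw [add_sub_cancel]
      _ ≤ K * (qnorm M η + qnorm M (ζ - η)) := qnorm_add_le M _ _
      _ ≤ 2 * K := by rw [hη]; nlinarith
  have hqw : qw M (qdil M t ζ) ≤ 1 + 2 * K * t :=
    calc qw M (qdil M t ζ) ≤ 1 + qnorm M (qdil M t ζ) := qw_le_one_add_qnorm _
      _ = 1 + t * qnorm M ζ := by rw [qnorm_qdil hM ht.le]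
      _ ≤ 1 + 2 * K * t := by nlinarith
  have ht₁ : 1 < ε' * t := by
    rw [div_lt_iff₀ hε'₀] at hbig
    nlinarith
  simp only [brNbhdM, Set.mem_iUnion]
  refine ⟨qdil M t η, hX η hηX t ht, ?_⟩
  calc qw M (qdil M t ζ - qdil M t η) ≤ 1 + qnorm M (qdil M t ζ - qdil M t η) :=
        qw_le_one_add_qnorm _
    _ = 1 + t * qnorm M (ζ - η) := by rw [qnorm_qdil_sub_qdil hM ht.le]
    _ < 2 * ε' * t := by nlinarith
    _ ≤ ε * qnorm M (qdil M t η) := by rw [qnorm_qdil hM ht.le, hη]; nlinarith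
    _ ≤ ε * qw M (qdil M t η) :=
        mul_le_mul_of_nonneg_left (qnorm_le_qw _) (by linarith)

end Inclusions

/-- Equivalence between `[⟨·⟩_M]`-neighborhoods of an `M`-conic set `X` and unions of
truncated `M`-cones outgoing from points of `X ∩ 𝕊_M`. -/
theorem brNbhdM_eq_union_mCones (M : Fin n → ℕ) (hM : ∀ j, 1 ≤ M j) :
    ∃ chat εhat : ℝ, 0 < chat ∧ 0 < εhat ∧
      ∀ ε : ℝ, 0 < ε → ε ≤ εhat → ∃ ε' : ℝ, 0 < ε' ∧ ε' < ε ∧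
        ∀ X : Set (EuclideanSpace ℝ (Fin n)), (0 : EuclideanSpace ℝ (Fin n)) ∉ X →
          IsMConic M X →
          brNbhdM M ε' X ⊆
            (⋃ η ∈ X ∩ mSphere M, mCone M η ε) ∩ {ξ | chat / ε < qw M ξ} ∧
          (⋃ η ∈ X ∩ mSphere M, mCone M η ε') ∩ {ξ | chat / ε' < qw M ξ} ⊆
            brNbhdM M ε X := by
  set K := quasiConst M
  have hK : 1 ≤ K := one_le_quasiConst M
  refine ⟨4 * K, 1, by positivity, one_pos, fun ε hε hε₁ => ?_⟩
  set ε' := ε / (16 * K ^ 2)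
  have hε'₀ : 0 < ε' := by positivity
  have hε'ε : 16 * K ^ 2 * ε' = ε := mul_div_cancel₀ ε (by positivity)
  have hK16 : 16 ≤ 16 * K ^ 2 := by nlinarith
  refine ⟨ε', hε'₀, by nlinarith, fun X _ hX =>
    ⟨brNbhdM_subset_iUnion_mCone hM hX hε₁ hε'ε.le,
      iUnion_mCone_subset_brNbhdM hM hX hε'₀ (by nlinarith) (by nlinarith)⟩⟩
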